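/- Let ψ : [0,1/2] → [0,1/2] be defined by ψ(t) = t/(2(1−t)), and let c : T → [0,1/2] be any function satisfying the recursion (c(x₊) + c(x₋))/2 = ψ(c(x)) for every x ∈ T. Then for every a ∈ T and every positive integer n, (1/2^n) Σ_{x ≥ a, d(x,a)=n} c(x) ≥ ψ^{∘n}(c(a)), where ψ^{∘n} denotes the n-fold composition of ψ with itself and the sum is over the 2^n descendants x of a at distance n from a. -/
import Mathlib


open scoped ENNReal NNReal
open Filter Topology

noncomputable section

/-- The map `ψ(t) = t/(2(1-t))`, a diffeomorphism of `[0,1/2]` onto itself. -/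
noncomputable def psi (t : ℝ) : ℝ := t / (2 * (1 - t))

lemma psi_mono {x y : ℝ} (hx : x ∈ Set.Icc (0:ℝ) (1/2)) (hy : y ∈ Set.Icc (0:ℝ) (1/2))
    (hxy : x ≤ y) : psi x ≤ psi y := by
  obtain ⟨hx0, hx1⟩ := hx; obtain ⟨hy0, hy1⟩ := hy
  unfold psi
  rw [div_le_div_iff₀ (by nlinarith) (by nlinarith)]
  nlinarith

lemma psi_maps {x : ℝ} (hx : x ∈ Set.Icc (0:ℝ) (1/2)) : psi x ∈ Set.Icc (0:ℝ) (1/2) := by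
  obtain ⟨hx0, hx1⟩ := hx
  constructor
  · exact div_nonneg hx0 (by nlinarith)
  · unfold psi
    rw [div_le_iff₀ (by nlinarith)]
    nlinarith

lemma psi_mid {x y : ℝ} (hx : x ∈ Set.Icc (0:ℝ) (1/2)) (hy : y ∈ Set.Icc (0:ℝ) (1/2)) :
    psi ((x + y) / 2) ≤ (psi x + psi y) / 2 := by
  obtain ⟨hx0, hx1⟩ := hx; obtain ⟨hy0, hy1⟩ := hy
  unfold psi
  have h1 : (0:ℝ) < 2 * (1 - x) := by nlinarith
  have h2 : (0:ℝ) < 2 * (1 - y) := by nlinarith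
  have h3 : (0:ℝ) < 2 * (1 - (x + y) / 2) := by nlinarith
  rw [div_add_div _ _ (ne_of_gt h1) (ne_of_gt h2), div_div, div_div,
    div_le_div_iff₀ (by positivity) (by positivity)]
  nlinarith [sq_nonneg (x - y)]

lemma psi_iter_maps (n : ℕ) {x : ℝ} (hx : x ∈ Set.Icc (0:ℝ) (1/2)) :
    psi^[n] x ∈ Set.Icc (0:ℝ) (1/2) := by
  induction n generalizing x with
  | zero => simpa using hx
  | succ n ih => rw [Function.iterate_succ_apply]; exact ih (psi_maps hx)

lemma psi_iter_mono (n : ℕ) {x y : ℝ} (hx : x ∈ Set.Icc (0:ℝ) (1/2))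
    (hy : y ∈ Set.Icc (0:ℝ) (1/2)) (hxy : x ≤ y) : psi^[n] x ≤ psi^[n] y := by
  induction n generalizing x y with
  | zero => simpa using hxy
  | succ n ih =>
    rw [Function.iterate_succ_apply, Function.iterate_succ_apply]
    exact ih (psi_maps hx) (psi_maps hy) (psi_mono hx hy hxy)

lemma psi_iter_mid (n : ℕ) {x y : ℝ} (hx : x ∈ Set.Icc (0:ℝ) (1/2))
    (hy : y ∈ Set.Icc (0:ℝ) (1/2)) :
    psi^[n] ((x + y) / 2) ≤ (psi^[n] x + psi^[n] y) / 2 := by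
  induction n generalizing x y with
  | zero => simp
  | succ n ih =>
    rw [Function.iterate_succ_apply, Function.iterate_succ_apply,
      Function.iterate_succ_apply]
    calc psi^[n] (psi ((x + y) / 2))
        ≤ psi^[n] ((psi x + psi y) / 2) := by
          refine psi_iter_mono n (psi_maps ?_) ?_ (psi_mid hx hy)
          · constructor
            · nlinarith [hx.1, hy.1]
            · nlinarith [hx.2, hy.2]
          · have h1 := psi_maps hx
            have h2 := psi_maps hy
            constructor
            · nlinarith [h1.1, h2.1]
            · nlinarith [h1.2, h2.2]
      _ ≤ (psi^[n] (psi x) + psi^[n] (psi y)) / 2 := ih (psi_maps hx) (psi_maps hy)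

/-- Let `c : T → [0,1/2]` satisfy `(c(x₊) + c(x₋))/2 = ψ(c(x))`
for all `x ∈ T`. Then for every `a ∈ T` and every positive integer `n`,
`(1/2^n) Σ_{x ≥ a, d(x,a) = n} c(x) ≥ ψ^{∘n}(c(a))`, the sum being over the `2^n`
descendants of `a` at distance `n` (here parametrized by the `2^n` binary words `v`
of length `n`, the descendants being `a ++ v`). -/
theorem convexity_recursion_estimate (c : List Bool → ℝ)
    (hc : ∀ x : List Bool, c x ∈ Set.Icc (0:ℝ) (1/2))
    (hrec : ∀ x : List Bool, (c (x ++ [false]) + c (x ++ [true])) / 2 = psi (c x))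
    (a : List Bool) (n : ℕ) (hn : 1 ≤ n) :
    psi^[n] (c a) ≤ (1 / 2 ^ n) * ∑ v : Fin n → Bool, c (a ++ List.ofFn v) := by
  clear hn
  induction n generalizing a with
  | zero => simp
  | succ n ih =>
    have hsum : ∑ v : Fin (n + 1) → Bool, c (a ++ List.ofFn v)
        = ∑ w : Fin n → Bool, c ((a ++ [false]) ++ List.ofFn w)
          + ∑ w : Fin n → Bool, c ((a ++ [true]) ++ List.ofFn w) := by
      rw [← Fintype.sum_equiv (Fin.consEquiv (fun _ : Fin (n+1) => Bool))
        (fun p => c (a ++ List.ofFn (Fin.cons p.1 p.2)))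
        (fun v => c (a ++ List.ofFn v)) (fun p => rfl)]
      rw [Fintype.sum_prod_type]
      simp [List.ofFn_succ, Fin.cons_succ, add_comm]
    rw [hsum, Function.iterate_succ_apply, ← hrec a]
    calc psi^[n] ((c (a ++ [false]) + c (a ++ [true])) / 2)
        ≤ (psi^[n] (c (a ++ [false])) + psi^[n] (c (a ++ [true]))) / 2 :=
          psi_iter_mid n (hc _) (hc _)
      _ ≤ ((1 / 2 ^ n) * ∑ w : Fin n → Bool, c ((a ++ [false]) ++ List.ofFn w)
            + (1 / 2 ^ n) * ∑ w : Fin n → Bool, c ((a ++ [true]) ++ List.ofFn w)) / 2 := by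
          gcongr <;> [exact ih (a ++ [false]); exact ih (a ++ [true])]
      _ = (1 / 2 ^ (n + 1)) * _ := by ring
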